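/- Let q : [t₁−τ,t₂] → ℝⁿ be a C² extremal of J^τ (i.e. q satisfies the Euler–Lagrange equations with time delay: d/dt(∂₃L[q]_τ(t) + ∂₅L[q]_τ(t+τ)) = ∂₂L[q]_τ(t) + ∂₄L[q]_τ(t+τ) on [t₁,t₂−τ], and d/dt ∂₃L[q]_τ(t) = ∂₂L[q]_τ(t) on [t₂−τ,t₂]), and suppose that ∂₄L[q]_τ(t+τ)·q̇(t) + ∂₅L[q]_τ(t+τ)·q̈(t) = 0 for all t ∈ [t₁−τ, t₂−τ]. Then q satisfies the DuBois–Reymond conditions with time delay: (i) for all t ∈ [t₁, t₂−τ], d/dt{L[q]_τ(t) − q̇(t)·(∂₃L[q]_τ(t) + ∂₅L[q]_τ(t+τ))} = ∂₁L[q]_τ(t); and (ii) for all t ∈ [t₂−τ, t₂], d/dt{L[q]_τ(t) − q̇(t)·∂₃L[q]_τ(t)} = ∂₁L[q]_τ(t). -/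

import Mathlib

open Set MeasureTheory RealInnerProductSpace

noncomputable section

/-- `ℝⁿ` as a Euclidean space. -/
abbrev Vec (n : ℕ) := EuclideanSpace ℝ (Fin n)

/-- The type of Lagrangians `L(t, q, q̇, q_τ, q̇_τ)`. -/
abbrev Lag (n : ℕ) := ℝ → Vec n → Vec n → Vec n → Vec n → ℝ

/-- `∂₁L[q]_τ(t)`: partial derivative of `L` w.r.t. its first (time) argument,
evaluated along `[q]_τ(t) = (t, q(t), q̇(t), q(t-τ), q̇(t-τ))`. -/
def dL1 {n : ℕ} (L : Lag n) (τ : ℝ) (q : ℝ → Vec n) (t : ℝ) : ℝ :=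
  deriv (fun s => L s (q t) (deriv q t) (q (t - τ)) (deriv q (t - τ))) t

/-- `∂₂L[q]_τ(t)` (a gradient, i.e. a vector in `ℝⁿ`). -/
def dL2 {n : ℕ} (L : Lag n) (τ : ℝ) (q : ℝ → Vec n) (t : ℝ) : Vec n :=
  gradient (fun y => L t y (deriv q t) (q (t - τ)) (deriv q (t - τ))) (q t)

/-- `∂₃L[q]_τ(t)`. -/
def dL3 {n : ℕ} (L : Lag n) (τ : ℝ) (q : ℝ → Vec n) (t : ℝ) : Vec n :=
  gradient (fun v => L t (q t) v (q (t - τ)) (deriv q (t - τ))) (deriv q t)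

/-- `∂₄L[q]_τ(t)`. -/
def dL4 {n : ℕ} (L : Lag n) (τ : ℝ) (q : ℝ → Vec n) (t : ℝ) : Vec n :=
  gradient (fun y => L t (q t) (deriv q t) y (deriv q (t - τ))) (q (t - τ))

/-- `∂₅L[q]_τ(t)`. -/
def dL5 {n : ℕ} (L : Lag n) (τ : ℝ) (q : ℝ → Vec n) (t : ℝ) : Vec n :=
  gradient (fun v => L t (q t) (deriv q t) (q (t - τ)) v) (deriv q (t - τ))

/-- `L[q]_τ(t)`: the Lagrangian evaluated along the delayed trajectory. -/
def lagAlong {n : ℕ} (L : Lag n) (τ : ℝ) (q : ℝ → Vec n) (t : ℝ) : ℝ :=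
  L t (q t) (deriv q t) (q (t - τ)) (deriv q (t - τ))

/-- The delayed functional `J^τ[q] = ∫_{t₁}^{t₂} L[q]_τ(t) dt`. -/
def Jτ {n : ℕ} (L : Lag n) (t₁ t₂ τ : ℝ) (q : ℝ → Vec n) : ℝ :=
  ∫ t in t₁..t₂, lagAlong L τ q t

/-- `L` is `C²` in all of its arguments (jointly). -/
def LagC2 {n : ℕ} (L : Lag n) : Prop :=
  ContDiff ℝ 2 (fun p : ℝ × Vec n × Vec n × Vec n × Vec n =>
    L p.1 p.2.1 p.2.2.1 p.2.2.2.1 p.2.2.2.2)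

/-- The Euler–Lagrange equations with time delay for the Lagrangian `L`. -/
def ELdelay {n : ℕ} (L : Lag n) (t₁ t₂ τ : ℝ) (q : ℝ → Vec n) : Prop :=
  (∀ t ∈ Icc t₁ (t₂ - τ),
      deriv (fun s => dL3 L τ q s + dL5 L τ q (s + τ)) t
        = dL2 L τ q t + dL4 L τ q (t + τ)) ∧
  (∀ t ∈ Icc (t₂ - τ) t₂,
      deriv (fun s => dL3 L τ q s) t = dL2 L τ q t)

/-!
Along the delayed jet `[q]_τ(t) = (t, q t, q̇ t, q (t - τ), q̇ (t - τ))` the chain rule gives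
`d/dt L[q]_τ = ∂₁L + ∂₂L·q̇ + ∂₃L·q̈ + ∂₄L·q̇(t-τ) + ∂₅L·q̈(t-τ)`, and the last two terms are the
hypothesis at `t - τ`, hence vanish on `[t₁, t₂]`. Subtracting `d/dt (q̇ · p)` for the momentum `p`
of the Euler–Lagrange equation and replacing `p'` by the equation cancels `∂₂L·q̇ + ∂₃L·q̈`; what
remains besides `∂₁L` is the hypothesis at `t` on `[t₁, t₂-τ]`, and nothing on `[t₂-τ, t₂]`.
-/

open InnerProductSpace

theorem gradient_comp_of_hasFDerivAt {𝕜 E F : Type*} [RCLike 𝕜]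
    [NormedAddCommGroup E] [NormedSpace 𝕜 E]
    [NormedAddCommGroup F] [InnerProductSpace 𝕜 F] [CompleteSpace F]
    {f : E → 𝕜} {g : F → E} {g' : F →L[𝕜] E} {a : F}
    (hf : DifferentiableAt 𝕜 f (g a)) (hg : HasFDerivAt g g' a) :
    gradient (fun y => f (g y)) a = (toDual 𝕜 F).symm ((fderiv 𝕜 f (g a)).comp g') :=
  congrArg _ (hf.hasFDerivAt.comp a hg).fderiv

section DelayedJet

variable {n : ℕ}

abbrev Phase (n : ℕ) := ℝ × Vec n × Vec n × Vec n × Vec n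

def uncurryLag (L : Lag n) (p : Phase n) : ℝ := L p.1 p.2.1 p.2.2.1 p.2.2.2.1 p.2.2.2.2

def delayedJet (τ : ℝ) (q : ℝ → Vec n) (t : ℝ) : Phase n :=
  (t, q t, deriv q t, q (t - τ), deriv q (t - τ))

def inclSlot₂ (n : ℕ) : Vec n →L[ℝ] Phase n :=
  (0 : Vec n →L[ℝ] ℝ).prod ((ContinuousLinearMap.id ℝ (Vec n)).prod 0)

def inclSlot₃ (n : ℕ) : Vec n →L[ℝ] Phase n :=
  (0 : Vec n →L[ℝ] ℝ).prod ((0 : Vec n →L[ℝ] Vec n).prod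
    ((ContinuousLinearMap.id ℝ (Vec n)).prod 0))

def inclSlot₄ (n : ℕ) : Vec n →L[ℝ] Phase n :=
  (0 : Vec n →L[ℝ] ℝ).prod ((0 : Vec n →L[ℝ] Vec n).prod ((0 : Vec n →L[ℝ] Vec n).prod
    ((ContinuousLinearMap.id ℝ (Vec n)).prod 0)))

def inclSlot₅ (n : ℕ) : Vec n →L[ℝ] Phase n :=
  (0 : Vec n →L[ℝ] ℝ).prod ((0 : Vec n →L[ℝ] Vec n).prod ((0 : Vec n →L[ℝ] Vec n).prod
    ((0 : Vec n →L[ℝ] Vec n).prod (ContinuousLinearMap.id ℝ (Vec n)))))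

variable {L : Lag n}

theorem dL1_eq (hL : Differentiable ℝ (uncurryLag L)) (τ : ℝ) (q : ℝ → Vec n) (t : ℝ) :
    dL1 L τ q t = fderiv ℝ (uncurryLag L) (delayedJet τ q t) (1, 0, 0, 0, 0) :=
  ((hL _).hasFDerivAt.comp_hasDerivAt
    (f := fun s => ((s, q t, deriv q t, q (t - τ), deriv q (t - τ)) : Phase n)) t
    ((hasDerivAt_id t).prodMk ((hasDerivAt_const t _).prodMk ((hasDerivAt_const t _).prodMk
      ((hasDerivAt_const t _).prodMk (hasDerivAt_const t _)))))).deriv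

theorem dL2_eq (hL : Differentiable ℝ (uncurryLag L)) (τ : ℝ) (q : ℝ → Vec n) (t : ℝ) :
    dL2 L τ q t =
      (toDual ℝ (Vec n)).symm ((fderiv ℝ (uncurryLag L) (delayedJet τ q t)).comp (inclSlot₂ n)) :=
  gradient_comp_of_hasFDerivAt
    (g := fun y => ((t, y, deriv q t, q (t - τ), deriv q (t - τ)) : Phase n)) (hL _)
    ((hasFDerivAt_const _ _).prodMk ((hasFDerivAt_id _).prodMk (hasFDerivAt_const _ _)))

theorem dL3_eq (hL : Differentiable ℝ (uncurryLag L)) (τ : ℝ) (q : ℝ → Vec n) (t : ℝ) :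
    dL3 L τ q t =
      (toDual ℝ (Vec n)).symm ((fderiv ℝ (uncurryLag L) (delayedJet τ q t)).comp (inclSlot₃ n)) :=
  gradient_comp_of_hasFDerivAt
    (g := fun y => ((t, q t, y, q (t - τ), deriv q (t - τ)) : Phase n)) (hL _)
    ((hasFDerivAt_const _ _).prodMk ((hasFDerivAt_const _ _).prodMk
      ((hasFDerivAt_id _).prodMk (hasFDerivAt_const _ _))))

theorem dL4_eq (hL : Differentiable ℝ (uncurryLag L)) (τ : ℝ) (q : ℝ → Vec n) (t : ℝ) :
    dL4 L τ q t =
      (toDual ℝ (Vec n)).symm ((fderiv ℝ (uncurryLag L) (delayedJet τ q t)).comp (inclSlot₄ n)) :=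
  gradient_comp_of_hasFDerivAt
    (g := fun y => ((t, q t, deriv q t, y, deriv q (t - τ)) : Phase n)) (hL _)
    ((hasFDerivAt_const _ _).prodMk ((hasFDerivAt_const _ _).prodMk
      ((hasFDerivAt_const _ _).prodMk ((hasFDerivAt_id _).prodMk (hasFDerivAt_const _ _)))))

theorem dL5_eq (hL : Differentiable ℝ (uncurryLag L)) (τ : ℝ) (q : ℝ → Vec n) (t : ℝ) :
    dL5 L τ q t =
      (toDual ℝ (Vec n)).symm ((fderiv ℝ (uncurryLag L) (delayedJet τ q t)).comp (inclSlot₅ n)) :=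
  gradient_comp_of_hasFDerivAt
    (g := fun y => ((t, q t, deriv q t, q (t - τ), y) : Phase n)) (hL _)
    ((hasFDerivAt_const _ _).prodMk ((hasFDerivAt_const _ _).prodMk
      ((hasFDerivAt_const _ _).prodMk ((hasFDerivAt_const _ _).prodMk (hasFDerivAt_id _)))))

theorem hasDerivAt_delayedJet {q : ℝ → Vec n} (hq : Differentiable ℝ q)
    (hq' : Differentiable ℝ (deriv q)) (τ t : ℝ) :
    HasDerivAt (delayedJet τ q)
      (1, deriv q t, deriv (deriv q) t, deriv q (t - τ), deriv (deriv q) (t - τ)) t :=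
  (hasDerivAt_id t).prodMk ((hq t).hasDerivAt.prodMk ((hq' t).hasDerivAt.prodMk
    (((hq _).hasDerivAt.comp_sub_const t τ).prodMk ((hq' _).hasDerivAt.comp_sub_const t τ))))

theorem hasDerivAt_lagAlong {q : ℝ → Vec n} (hL : Differentiable ℝ (uncurryLag L))
    (hq : Differentiable ℝ q) (hq' : Differentiable ℝ (deriv q)) (τ t : ℝ) :
    HasDerivAt (lagAlong L τ q)
      (dL1 L τ q t + ⟪dL2 L τ q t, deriv q t⟫ + ⟪dL3 L τ q t, deriv (deriv q) t⟫
        + ⟪dL4 L τ q t, deriv q (t - τ)⟫ + ⟪dL5 L τ q t, deriv (deriv q) (t - τ)⟫) t := by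
  refine ((hL _).hasFDerivAt.comp_hasDerivAt t (hasDerivAt_delayedJet hq hq' τ t)).congr_deriv ?_
  rw [dL1_eq hL, dL2_eq hL, dL3_eq hL, dL4_eq hL, dL5_eq hL]
  simp only [toDual_symm_apply, ContinuousLinearMap.comp_apply, ← map_add]
  congr 1
  simp [inclSlot₂, inclSlot₃, inclSlot₄, inclSlot₅]

theorem hasDerivAt_lagAlong_sub_inner {q : ℝ → Vec n} (hL : Differentiable ℝ (uncurryLag L))
    (hq : Differentiable ℝ q) (hq' : Differentiable ℝ (deriv q)) {p : ℝ → Vec n} {p' : Vec n}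
    {τ t : ℝ} (hp : HasDerivAt p p' t) :
    HasDerivAt (fun s => lagAlong L τ q s - ⟪deriv q s, p s⟫)
      (dL1 L τ q t + ⟪dL2 L τ q t - p', deriv q t⟫ + ⟪dL3 L τ q t - p t, deriv (deriv q) t⟫
        + ⟪dL4 L τ q t, deriv q (t - τ)⟫ + ⟪dL5 L τ q t, deriv (deriv q) (t - τ)⟫) t :=
  ((hasDerivAt_lagAlong hL hq hq' τ t).sub ((hq' t).hasDerivAt.inner ℝ hp)).congr_deriv <| by
    rw [inner_sub_left, inner_sub_left, real_inner_comm p', real_inner_comm (p t)]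
    ring

theorem differentiable_fderiv_uncurryLag_delayedJet {q : ℝ → Vec n} (hL : LagC2 L)
    (hq : ContDiff ℝ 2 q) (τ : ℝ) :
    Differentiable ℝ (fun t => fderiv ℝ (uncurryLag L) (delayedJet τ q t)) := by
  have hjet : ContDiff ℝ 1 (delayedJet τ q) := by
    have hq₁ : ContDiff ℝ 1 q := hq.of_le (by norm_num)
    have hq₂ : ContDiff ℝ 1 (deriv q) := hq.deriv'
    unfold delayedJet
    fun_prop
  exact ((hL.fderiv_right (m := 1) (by norm_num)).comp hjet).differentiable one_ne_zero

theorem differentiable_dL3 {q : ℝ → Vec n} (hL : LagC2 L) (hq : ContDiff ℝ 2 q) (τ : ℝ) :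
    Differentiable ℝ (dL3 L τ q) := by
  rw [funext (dL3_eq (hL.differentiable (by norm_num)) τ q)]
  exact (toDual ℝ (Vec n)).symm.differentiable.comp
    ((differentiable_fderiv_uncurryLag_delayedJet hL hq τ).clm_comp (differentiable_const _))

theorem differentiable_dL5 {q : ℝ → Vec n} (hL : LagC2 L) (hq : ContDiff ℝ 2 q) (τ : ℝ) :
    Differentiable ℝ (dL5 L τ q) := by
  rw [funext (dL5_eq (hL.differentiable (by norm_num)) τ q)]
  exact (toDual ℝ (Vec n)).symm.differentiable.comp
    ((differentiable_fderiv_uncurryLag_delayedJet hL hq τ).clm_comp (differentiable_const _))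

end DelayedJet

theorem duBois_Reymond_with_time_delay_general
    {n : ℕ} (t₁ t₂ τ : ℝ) (hτ : 0 < τ)
    (hτ' : τ < t₂ - t₁) (L : Lag n) (hL : LagC2 L)
    (q : ℝ → Vec n) (hq : ContDiff ℝ 2 q)
    (hEL : ELdelay L t₁ t₂ τ q)
    (hcond : ∀ t ∈ Icc (t₁ - τ) (t₂ - τ),
      ⟪dL4 L τ q (t + τ), deriv q t⟫ + ⟪dL5 L τ q (t + τ), deriv (deriv q) t⟫ = 0) :
    (∀ t ∈ Icc t₁ (t₂ - τ),
      deriv (fun s => lagAlong L τ q s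
          - ⟪deriv q s, dL3 L τ q s + dL5 L τ q (s + τ)⟫) t
        = dL1 L τ q t) ∧
    (∀ t ∈ Icc (t₂ - τ) t₂,
      deriv (fun s => lagAlong L τ q s - ⟪deriv q s, dL3 L τ q s⟫) t
        = dL1 L τ q t) := by
  have hL₁ : Differentiable ℝ (uncurryLag L) := hL.differentiable (by norm_num)
  have hq₁ : Differentiable ℝ q := hq.differentiable (by norm_num)
  have hq₂ : Differentiable ℝ (deriv q) := (hq.deriv' (n := 1)).differentiable one_ne_zero
  have hdelayed : ∀ t ∈ Icc t₁ t₂,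
      ⟪dL4 L τ q t, deriv q (t - τ)⟫ + ⟪dL5 L τ q t, deriv (deriv q) (t - τ)⟫ = 0 :=
    fun t ht => by simpa using hcond (t - τ) ⟨by linarith [ht.1], by linarith [ht.2]⟩
  refine ⟨fun t ht => ?_, fun t ht => ?_⟩
  · have hp : HasDerivAt (fun s => dL3 L τ q s + dL5 L τ q (s + τ))
        (dL2 L τ q t + dL4 L τ q (t + τ)) t := by
      rw [← hEL.1 t ht]
      exact ((differentiable_dL3 hL hq τ).add
        ((differentiable_dL5 hL hq τ).comp (differentiable_id.add_const τ)) t).hasDerivAt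
    rw [(hasDerivAt_lagAlong_sub_inner hL₁ hq₁ hq₂ hp).deriv]
    simp only [sub_add_cancel_left, inner_neg_left]
    linarith [hdelayed t ⟨ht.1, by linarith [ht.2]⟩, hcond t ⟨by linarith [ht.1], ht.2⟩]
  · have hp : HasDerivAt (dL3 L τ q) (dL2 L τ q t) t := by
      rw [← hEL.2 t ht]
      exact (differentiable_dL3 hL hq τ t).hasDerivAt
    rw [(hasDerivAt_lagAlong_sub_inner hL₁ hq₁ hq₂ hp).deriv]
    simp only [sub_self, inner_zero_left, add_zero, add_assoc]
    rw [hdelayed t ⟨by linarith [ht.1], ht.2⟩, add_zero]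

/-- DuBois–Reymond necessary conditions with time delay, along a `C²`
Euler–Lagrange extremal satisfying the extra condition
`∂₄L[q]_τ(t+τ)·q̇(t) + ∂₅L[q]_τ(t+τ)·q̈(t) = 0` on `[t₁-τ, t₂-τ]`. -/
theorem duBois_Reymond_with_time_delay
    {n : ℕ} (hn : 0 < n) (t₁ t₂ τ : ℝ) (ht : t₁ < t₂) (hτ : 0 < τ)
    (hτ' : τ < t₂ - t₁) (L : Lag n) (hL : LagC2 L)
    (q : ℝ → Vec n) (hq : ContDiff ℝ 2 q)
    (hEL : ELdelay L t₁ t₂ τ q)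
    (hcond : ∀ t ∈ Icc (t₁ - τ) (t₂ - τ),
      ⟪dL4 L τ q (t + τ), deriv q t⟫ + ⟪dL5 L τ q (t + τ), deriv (deriv q) t⟫ = 0) :
    (∀ t ∈ Icc t₁ (t₂ - τ),
      deriv (fun s => lagAlong L τ q s
          - ⟪deriv q s, dL3 L τ q s + dL5 L τ q (s + τ)⟫) t
        = dL1 L τ q t) ∧
    (∀ t ∈ Icc (t₂ - τ) t₂,
      deriv (fun s => lagAlong L τ q s - ⟪deriv q s, dL3 L τ q s⟫) t
        = dL1 L τ q t) :=
  duBois_Reymond_with_time_delay_general t₁ t₂ τ hτ hτ' L hL q hq hEL hcond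

end
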